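/- Effective resistance is a metric on the vertices of a finite connected weighted graph: r(x,x) = 0, r(x,y) = r(y,x) > 0 for x ≠ y, and r(x,z) ≤ r(x,y) + r(y,z) for all vertices x, y, z. -/
import Mathlib


/-- The weighted Laplacian matrix of the weight function `w`. -/
def lapMatrix {V : Type} [Fintype V] [DecidableEq V] (w : V → V → ℝ) :
    Matrix V V ℝ :=
  fun i j => if i = j then ∑ k, w i k else -(w i j)

/-- The measure `δ_a - δ_b` as a vector. -/
def dirac {V : Type} [DecidableEq V] (a b : V) : V → ℝ :=
  fun v => (if v = a then 1 else 0) - (if v = b then 1 else 0)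

section Aux

variable {V : Type} [Fintype V] [DecidableEq V]

open Matrix

set_option linter.unusedSectionVars false

lemma lap_mulVec (w : V → V → ℝ) (hdiag : ∀ i, w i i = 0) (f : V → ℝ) (i : V) :
    (lapMatrix w).mulVec f i = ∑ j, w i j * (f i - f j) := by
  unfold lapMatrix Matrix.mulVec dotProduct
  have h1 : ∀ j : V, (if i = j then ∑ k, w i k else -(w i j)) * f j
      = (if i = j then (∑ k, w i k) * f j else 0) + -(w i j) * f j := by
    intro j
    by_cases h : i = j
    · subst h; simp [hdiag i]
    · simp [h]
  rw [Finset.sum_congr rfl fun j _ => h1 j, Finset.sum_add_distrib,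
    Finset.sum_ite_eq Finset.univ i]
  simp only [Finset.mem_univ, if_true]
  rw [Finset.sum_congr rfl (fun j _ => mul_sub (w i j) (f i) (f j)),
    Finset.sum_sub_distrib, ← Finset.sum_mul]
  simp only [neg_mul, Finset.sum_neg_distrib]
  ring

lemma quad (w : V → V → ℝ) (hsym : ∀ i j, w i j = w j i) (hdiag : ∀ i, w i i = 0)
    (f : V → ℝ) :
    2 * (f ⬝ᵥ (lapMatrix w).mulVec f) = ∑ i, ∑ j, w i j * (f i - f j) ^ 2 := by
  have h : f ⬝ᵥ (lapMatrix w).mulVec f = ∑ i, ∑ j, w i j * (f i * (f i - f j)) := by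
    unfold dotProduct
    refine Finset.sum_congr rfl fun i _ => ?_
    rw [lap_mulVec w hdiag f i, Finset.mul_sum]
    exact Finset.sum_congr rfl fun j _ => by ring
  have h2 : (∑ i, ∑ j, w i j * (f i * (f i - f j)))
      = ∑ i, ∑ j, w i j * (f j * (f j - f i)) := by
    rw [Finset.sum_comm]
    exact Finset.sum_congr rfl fun x _ => Finset.sum_congr rfl fun y _ => by rw [hsym y x]
  rw [two_mul, h]
  nth_rewrite 2 [h2]
  rw [← Finset.sum_add_distrib]
  refine Finset.sum_congr rfl fun i _ => ?_
  rw [← Finset.sum_add_distrib]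
  exact Finset.sum_congr rfl fun j _ => by ring

lemma terms_zero (w : V → V → ℝ) (hnonneg : ∀ i j, 0 ≤ w i j) (f : V → ℝ)
    (h0 : ∑ i, ∑ j, w i j * (f i - f j) ^ 2 = 0) :
    ∀ i j, w i j * (f i - f j) ^ 2 = 0 := by
  have hnn : ∀ i ∈ Finset.univ, (0:ℝ) ≤ ∑ j, w i j * (f i - f j) ^ 2 := fun i _ =>
    Finset.sum_nonneg fun j _ => mul_nonneg (hnonneg i j) (sq_nonneg _)
  have h1 := (Finset.sum_eq_zero_iff_of_nonneg hnn).mp h0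
  intro i j
  exact (Finset.sum_eq_zero_iff_of_nonneg
    (fun j _ => mul_nonneg (hnonneg i j) (sq_nonneg _))).mp
    (h1 i (Finset.mem_univ i)) j (Finset.mem_univ j)

lemma const_of (w : V → V → ℝ) (hsym : ∀ i j, w i j = w j i)
    (hconn : (SimpleGraph.fromRel fun i j => 0 < w i j).Connected)
    (f : V → ℝ) (hz : ∀ i j, w i j * (f i - f j) ^ 2 = 0) : ∀ u v, f u = f v := by
  have key : ∀ i j, (SimpleGraph.fromRel fun i j => 0 < w i j).Adj i j → f i = f j := by
    intro i j hij
    rw [SimpleGraph.fromRel_adj] at hij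
    have hw : 0 < w i j := by
      rcases hij.2 with h | h
      · exact h
      · rw [hsym]; exact h
    have h1 : (f i - f j) ^ 2 = 0 := by
      rcases mul_eq_zero.mp (hz i j) with h | h
      · exact absurd h (ne_of_gt hw)
      · exact h
    have h2 : f i - f j = 0 := by
      have := sq_eq_zero_iff.mp h1
      exact this
    linarith
  intro u v
  obtain ⟨p⟩ := hconn.preconnected u v
  induction p with
  | nil => rfl
  | cons h p ih => exact (key _ _ h).trans ih

lemma ker_const (w : V → V → ℝ) (hsym : ∀ i j, w i j = w j i)
    (hnonneg : ∀ i j, 0 ≤ w i j) (hdiag : ∀ i, w i i = 0)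
    (hconn : (SimpleGraph.fromRel fun i j => 0 < w i j).Connected)
    (k : V → ℝ) (hk : (lapMatrix w).mulVec k = 0) : ∀ u v, k u = k v := by
  have h0 : ∑ i, ∑ j, w i j * (k i - k j) ^ 2 = 0 := by
    rw [← quad w hsym hdiag k, hk, dotProduct_zero, mul_zero]
  exact const_of w hsym hconn k (terms_zero w hnonneg k h0)

lemma dirac_dot (a b : V) (f : V → ℝ) : dirac a b ⬝ᵥ f = f a - f b := by
  unfold dirac dotProduct
  simp [sub_mul, ite_mul, Finset.sum_sub_distrib]

lemma res_eq (w : V → V → ℝ) (hsym : ∀ i j, w i j = w j i) (hdiag : ∀ i, w i i = 0)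
    (a b : V) (f : V → ℝ) (hf : (lapMatrix w).mulVec f = dirac a b) :
    2 * (f a - f b) = ∑ i, ∑ j, w i j * (f i - f j) ^ 2 := by
  rw [← dirac_dot a b f, ← hf, ← quad w hsym hdiag f]
  congr 1
  exact dotProduct_comm _ _

lemma maxprin (w : V → V → ℝ) (hsym : ∀ i j, w i j = w j i)
    (hnonneg : ∀ i j, 0 ≤ w i j) (hdiag : ∀ i, w i i = 0)
    (hconn : (SimpleGraph.fromRel fun i j => 0 < w i j).Connected)
    (a b : V) (f : V → ℝ)
    (hf : (lapMatrix w).mulVec f = dirac a b) : ∀ v, f v ≤ f a := by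
  obtain ⟨u, -, hu⟩ := Finset.exists_max_image (Finset.univ : Finset V) f
    ⟨a, Finset.mem_univ a⟩
  have step : ∀ c d : V, (SimpleGraph.fromRel fun i j => 0 < w i j).Adj c d →
      c ≠ a → f c = f u → f d = f u := by
    intro c d hcd hca hc
    rw [SimpleGraph.fromRel_adj] at hcd
    have hw : 0 < w c d := by
      rcases hcd.2 with h | h
      · exact h
      · rw [hsym]; exact h
    have hQ : ∑ j, w c j * (f c - f j) = dirac a b c := by
      rw [← lap_mulVec w hdiag f c, hf]
    have hle : dirac a b c ≤ 0 := by
      unfold dirac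
      rw [if_neg hca]
      split <;> norm_num
    have hterm : ∀ j ∈ Finset.univ, (0:ℝ) ≤ w c j * (f c - f j) := by
      intro j _
      apply mul_nonneg (hnonneg c j)
      rw [hc]
      linarith [hu j (Finset.mem_univ j)]
    have hsum0 : ∑ j, w c j * (f c - f j) = 0 :=
      le_antisymm (hQ ▸ hle) (Finset.sum_nonneg hterm)
    have hd := (Finset.sum_eq_zero_iff_of_nonneg hterm).mp hsum0 d (Finset.mem_univ d)
    have : f c - f d = 0 := by
      rcases mul_eq_zero.mp hd with h | h
      · exact absurd h (ne_of_gt hw)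
      · exact h
    rw [← hc]; linarith
  have walkclaim : ∀ c e : V, (SimpleGraph.fromRel fun i j => 0 < w i j).Walk c e →
      e = a → f c = f u → f a = f u := by
    intro c e p
    induction p with
    | nil => intro he hc; rw [← he]; exact hc
    | @cons c' d _ h p ih =>
        intro he hc
        by_cases hca : c' = a
        · rw [← hca]; exact hc
        · exact ih he (step c' d h hca hc)
  obtain ⟨p⟩ := hconn.preconnected u a
  have ha : f a = f u := walkclaim u a p rfl rfl
  intro v
  rw [ha]
  exact hu v (Finset.mem_univ v)

end Aux

theorem effective_resistance_is_metric
    {V : Type} [Fintype V] [DecidableEq V]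
    (w : V → V → ℝ)
    (hsym : ∀ i j, w i j = w j i)
    (hnonneg : ∀ i j, 0 ≤ w i j)
    (hdiag : ∀ i, w i i = 0)
    (hconn : (SimpleGraph.fromRel fun i j => 0 < w i j).Connected)
    (r : V → V → ℝ)
    (hr : ∀ a b : V, ∃ f : V → ℝ,
      (lapMatrix w).mulVec f = dirac a b ∧ r a b = f a - f b) :
    (∀ x : V, r x x = 0) ∧
      (∀ x y : V, x ≠ y → r x y = r y x ∧ 0 < r x y) ∧
      (∀ x y z : V, r x z ≤ r x y + r y z) := by
  refine ⟨?_, ?_, ?_⟩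
  · intro x
    obtain ⟨f, -, hrf⟩ := hr x x
    rw [hrf]; ring
  · intro x y hxy
    obtain ⟨f, hf, hrf⟩ := hr x y
    obtain ⟨g, hg, hrg⟩ := hr y x
    have hker : (lapMatrix w).mulVec (f + g) = 0 := by
      rw [Matrix.mulVec_add, hf, hg]
      funext v
      simp only [Pi.add_apply, Pi.zero_apply, dirac]
      ring
    have hc := ker_const w hsym hnonneg hdiag hconn _ hker x y
    simp only [Pi.add_apply] at hc
    have hq := res_eq w hsym hdiag x y f hf
    have hsumnn : (0:ℝ) ≤ ∑ i, ∑ j, w i j * (f i - f j) ^ 2 :=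
      Finset.sum_nonneg fun i _ =>
        Finset.sum_nonneg fun j _ => mul_nonneg (hnonneg i j) (sq_nonneg _)
    have hge : 0 ≤ f x - f y := by linarith
    refine ⟨by rw [hrf, hrg]; linarith, ?_⟩
    rcases eq_or_lt_of_le hge with heq | hlt
    · exfalso
      have hsum0 : ∑ i, ∑ j, w i j * (f i - f j) ^ 2 = 0 := by linarith
      have hconstf := const_of w hsym hconn f (terms_zero w hnonneg f hsum0)
      have h0 : (lapMatrix w).mulVec f x = 0 := by
        rw [lap_mulVec w hdiag]
        apply Finset.sum_eq_zero
        intro j _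
        rw [hconstf x j]
        ring
      rw [hf] at h0
      unfold dirac at h0
      rw [if_pos rfl, if_neg hxy] at h0
      norm_num at h0
    · rw [hrf]; exact hlt
  · intro x y z
    obtain ⟨f, hf, hrf⟩ := hr x y
    obtain ⟨g, hg, hrg⟩ := hr y z
    obtain ⟨h, hh, hrh⟩ := hr x z
    have hker : (lapMatrix w).mulVec (f + g - h) = 0 := by
      rw [Matrix.mulVec_sub, Matrix.mulVec_add, hf, hg, hh]
      funext v
      simp only [Pi.sub_apply, Pi.add_apply, Pi.zero_apply, dirac]
      ring
    have hc := ker_const w hsym hnonneg hdiag hconn _ hker x z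
    simp only [Pi.sub_apply, Pi.add_apply] at hc
    have h1 : f y ≤ f z := by
      have hmf : (lapMatrix w).mulVec (-f) = dirac y x := by
        rw [Matrix.mulVec_neg, hf]
        funext v
        simp only [Pi.neg_apply, dirac]
        ring
      have := maxprin w hsym hnonneg hdiag hconn y x (-f) hmf z
      simp only [Pi.neg_apply] at this
      linarith
    have h2 : g x ≤ g y := maxprin w hsym hnonneg hdiag hconn y z g hg x
    rw [hrf, hrg, hrh]
    linarith
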